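/- arXiv:2603.21844 — 2 statements merged into one kernel-verified Lean document; each statement's English description precedes it below -/
import Mathlib

section
/- Let G be a DAG and S a prefix node set, and suppose u ∈ S and w ∈ V\S satisfy: u and w are d-connected given S\{u}, and u and w are d-separated given (S\{u}) ∪ W for some W ⊆ V\S. If W is chosen minimal with this property, then W ⊆ Anc(w). -/
/-- A relation (directed graph) is acyclic: no directed cycle. -/
def AcyclicRel {V : Type*} (E : V → V → Prop) : Prop :=
  ∀ v, ¬ Relation.TransGen E v v

/-- A prefix node set: closed under taking (strict) ancestors. -/
def PrefixSet {V : Type*} (E : V → V → Prop) (S : Set V) : Prop :=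
  ∀ v ∈ S, ∀ u, Relation.TransGen E u v → u ∈ S

/-- Strict ancestors of `v`. -/
def Anc {V : Type*} (E : V → V → Prop) (v : V) : Set V :=
  {u | Relation.TransGen E u v}

/-- Inclusive ancestors of `v` : `Anc[v] = Anc(v) ∪ {v}`. -/
def AncI {V : Type*} (E : V → V → Prop) (v : V) : Set V :=
  {u | Relation.ReflTransGen E u v}

/-- A path (list of vertices, consecutive ones adjacent in the skeleton) is
active given the conditioning set `C`: every interior non-collider is outside
`C` and every collider has an inclusive descendant in `C`. -/
def ActivePath {V : Type*} (E : V → V → Prop) (C : Set V) (p : List V) : Prop :=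
  p.Chain' (fun a b => E a b ∨ E b a) ∧
  (∀ a w b, [a, w, b] <:+: p → ¬(E a w ∧ E b w) → w ∉ C) ∧
  (∀ a w b, [a, w, b] <:+: p → E a w → E b w → ∃ d ∈ C, Relation.ReflTransGen E w d)

/-- `u` and `v` are d-connected given `C`. -/
def DConn {V : Type*} (E : V → V → Prop) (C : Set V) (u v : V) : Prop :=
  ∃ p : List V, p.head? = some u ∧ p.getLast? = some v ∧ ActivePath E C p

/-- `u` and `v` are d-separated given `C`. -/
def DSep {V : Type*} (E : V → V → Prop) (C : Set V) (u v : V) : Prop :=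
  ¬ DConn E C u v

/-- Descend along an active path: if `y` has an out-edge to the next vertex on
the path, then `y` is a strict ancestor of a member of the conditioning set or
of the last vertex of the path. -/
lemma descend {V : Type*} (E : V → V → Prop) (C0 : Set V) (p : List V)
    (hcol : ∀ a y b, [a, y, b] <:+: p → E a y → E b y →
      ∃ d ∈ C0, Relation.ReflTransGen E y d) :
    ∀ r y b, (y :: b :: r) <:+ p → E y b →
      p.Chain' (fun a b => E a b ∨ E b a) →
      (∃ d ∈ C0, Relation.TransGen E y d) ∨
      ∃ z, p.getLast? = some z ∧ Relation.TransGen E y z := by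
  intro r
  induction r with
  | nil =>
    intro y b hsuf hyb _
    right
    refine ⟨b, ?_, Relation.TransGen.single hyb⟩
    obtain ⟨s, hs⟩ := hsuf
    rw [← hs]
    rw [show s ++ [y, b] = (s ++ [y]) ++ [b] by simp]
    simp
  | cons c r' ih =>
    intro y b hsuf hyb hch
    have hsuf' : (b :: c :: r') <:+ p := List.IsSuffix.trans ⟨[y], rfl⟩ hsuf
    have hchs : (y :: b :: c :: r').Chain' (fun a b => E a b ∨ E b a) :=
      hch.suffix hsuf
    have hbc : E b c ∨ E c b := (List.isChain_cons_cons.mp (List.isChain_cons_cons.mp hchs).2).1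
    rcases hbc with hbc | hcb
    · rcases ih b c hsuf' hbc hch with ⟨d, hd, htr⟩ | ⟨z, hz, htr⟩
      · exact Or.inl ⟨d, hd, Relation.TransGen.head hyb htr⟩
      · exact Or.inr ⟨z, hz, Relation.TransGen.head hyb htr⟩
    · -- collider at b
      obtain ⟨s, hs⟩ := hsuf
      have hinf : [y, b, c] <:+: p := ⟨s, r', by rw [← hs]; simp⟩
      obtain ⟨d, hd, htr⟩ := hcol y b c hinf hyb hcb
      exact Or.inl ⟨d, hd, Relation.TransGen.trans_left (Relation.TransGen.single hyb) htr⟩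

/-- If `u ∈ S` (a prefix node set) and `w ∉ S` are d-connected given `S \ {u}`
but d-separated given `(S \ {u}) ∪ W` for a minimal `W ⊆ V \ S`, then
`W ⊆ Anc(w)`. -/
theorem stmt_17 {V : Type*} [Fintype V] (E : V → V → Prop) (hacyc : AcyclicRel E)
    (S : Set V) (hS : PrefixSet E S) (u w : V) (hu : u ∈ S) (hw : w ∉ S)
    (hconn : DConn E (S \ {u}) u w)
    (W : Set V) (hW : W ⊆ Sᶜ)
    (hsep : DSep E ((S \ {u}) ∪ W) u w)
    (hmin : ∀ W' ⊂ W, ¬ DSep E ((S \ {u}) ∪ W') u w) :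
    W ⊆ Anc E w := by
  by_contra hnot
  rw [Set.not_subset] at hnot
  obtain ⟨x, hxW, hxA⟩ := hnot
  set W' : Set V := W ∩ Anc E w with hW'def
  have hss : W' ⊂ W := by
    constructor
    · exact Set.inter_subset_left
    · intro hle
      exact hxA (hle hxW).2
  have hdc : DConn E ((S \ {u}) ∪ W') u w := not_not.mp (hmin W' hss)
  obtain ⟨p, hhead, hlast, hch, hnc, hcol⟩ := hdc
  refine hsep ⟨p, hhead, hlast, hch, ?_, ?_⟩
  · -- non-colliders avoid (S \ {u}) ∪ W
    intro a y b hinf hncol hyC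
    have hy' : y ∉ (S \ {u}) ∪ W' := hnc a y b hinf hncol
    rcases hyC with hyS | hyW
    · exact hy' (Or.inl hyS)
    -- y ∈ W; so y ∉ W', hence y ∉ Anc E w, and y ∉ S
    have hyA : y ∉ Anc E w := fun h => hy' (Or.inr ⟨hyW, h⟩)
    have hyS : y ∉ S := hW hyW
    -- edges along the path at y
    obtain ⟨s, t, hp⟩ := hinf
    have hch3 : ([a, y, b]).Chain' (fun a b => E a b ∨ E b a) :=
      hch.infix ⟨s, t, hp⟩
    have hay : E a y ∨ E y a := (List.isChain_cons_cons.mp hch3).1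
    have hyb : E y b ∨ E b y := (List.isChain_cons_cons.mp (List.isChain_cons_cons.mp hch3).2).1
    -- from y, descend to a contradiction
    have key : (∃ d ∈ (S \ {u}) ∪ W', Relation.TransGen E y d) ∨
        Relation.TransGen E y u ∨ Relation.TransGen E y w := by
      by_cases hEay : E a y
      · -- then ¬ E b y, so E y b : descend rightwards
        have hEyb : E y b := hyb.resolve_right (fun h => hncol ⟨hEay, h⟩)
        have hsuf : (y :: b :: t) <:+ p := ⟨s ++ [a], by rw [← hp]; simp⟩
        rcases descend E ((S \ {u}) ∪ W') p hcol t y b hsuf hEyb hch with h | ⟨z, hz, htr⟩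
        · exact Or.inl h
        · rw [hlast] at hz
          exact Or.inr (Or.inr ((Option.some_inj.mp hz).symm ▸ htr))
      · -- E y a : descend leftwards along the reversed path
        have hEya : E y a := hay.resolve_left hEay
        have hchr : p.reverse.Chain' (fun a b => E a b ∨ E b a) := by
          show List.IsChain _ p.reverse
          rw [List.isChain_reverse]
          exact hch.imp (fun a b h => h.symm)
        have hcolr : ∀ a y b, [a, y, b] <:+: p.reverse → E a y → E b y →
            ∃ d ∈ (S \ {u}) ∪ W', Relation.ReflTransGen E y d := by
          intro a' y' b' hinf' h1 h2
          obtain ⟨s', t', hp'⟩ := hinf'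
          have : [b', y', a'] <:+: p := by
            refine ⟨t'.reverse, s'.reverse, ?_⟩
            have := congrArg List.reverse hp'
            simpa using this
          exact hcol b' y' a' this h2 h1
        have hsuf : (y :: a :: s.reverse) <:+ p.reverse :=
          ⟨t.reverse ++ [b], by rw [← hp]; simp⟩
        rcases descend E ((S \ {u}) ∪ W') p.reverse hcolr s.reverse y a hsuf hEya hchr
          with h | ⟨z, hz, htr⟩
        · exact Or.inl h
        · rw [List.getLast?_reverse, hhead] at hz
          exact Or.inr (Or.inl ((Option.some_inj.mp hz).symm ▸ htr))
    rcases key with ⟨d, hd, htr⟩ | htu | htw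
    · rcases hd with ⟨hdS, _⟩ | ⟨_, hdA⟩
      · exact hyS (hS d hdS y htr)
      · exact hyA (htr.trans hdA)
    · exact hyS (hS u hu y htu)
    · exact hyA htw
  · -- colliders: conditioning set only grew
    intro a y b hinf h1 h2
    obtain ⟨d, hd, htr⟩ := hcol a y b hinf h1 h2
    exact ⟨d, hd.imp id (fun h => h.1), htr⟩
end

section
/- Let G be a DAG and S a prefix node set such that V\S contains no collider of any v-structure with the collider and one parent both in V\S. If u, v ∈ V are non-adjacent with v ∈ V\S, and W ⊆ V\S is a minimal set with u ⫫_G v | S ∪ W, then W is a clique in G. -/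
namespace St18

variable {V : Type*}

def Adj (E : V → V → Prop) (a b : V) : Prop := E a b ∨ E b a

def CF (E : V → V → Prop) (p : List V) : Prop :=
  ∀ a w b, [a,w,b] <:+: p → ¬(E a w ∧ E b w)

lemma infix_cons_lift {l t : List V} {a : V} (h : l <:+: t) : l <:+: a :: t := by
  obtain ⟨s, r, rfl⟩ := h
  exact ⟨a :: s, r, rfl⟩

lemma triple_mem {a w b : V} {p : List V} (h : [a,w,b] <:+: p) : w ∈ p :=
  h.subset (by simp)

lemma mem_tail_of_triple {a w b : V} {p : List V} (h : [a,w,b] <:+: p) : w ∈ p.tail := by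
  obtain ⟨s, r, rfl⟩ := h
  cases s with
  | nil => simp
  | cons c s => simp

lemma mem_dropLast_of_triple {a w b : V} {p : List V} (h : [a,w,b] <:+: p) :
    w ∈ p.dropLast := by
  obtain ⟨s, r, rfl⟩ := h
  have : s ++ [a, w, b] ++ r = (s ++ [a, w]) ++ (b :: r) := by simp
  rw [this, List.dropLast_append_of_ne_nil (by simp)]
  simp

lemma getLast?_append_cons' (l : List V) (b : V) (r : List V) :
    (l ++ b :: r).getLast? = (b :: r).getLast? := by
  rw [List.getLast?_append, Option.or_of_isSome (List.getLast?_isSome.2 (by simp))]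

lemma head?_mid (l : List V) (a : V) (X Y : List V) :
    (l ++ a :: X).head? = (l ++ a :: Y).head? := by
  cases l <;> simp

lemma nbrL {a c b : V} {p : List V} (h : [a,c,b] <:+: p) :
    p.head? = some a ∨ ∃ α, [α,a,c] <:+: p := by
  obtain ⟨s, r, rfl⟩ := h
  rcases List.eq_nil_or_concat s with rfl | ⟨L, α, rfl⟩
  · left; rfl
  · right
    exact ⟨α, ⟨L, b :: r, by simp⟩⟩

lemma nbrR {a c b : V} {p : List V} (h : [a,c,b] <:+: p) :
    p.getLast? = some b ∨ ∃ β, [c,b,β] <:+: p := by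
  obtain ⟨s, r, rfl⟩ := h
  cases r with
  | nil =>
    left
    rw [show s ++ [a,c,b] ++ [] = s ++ a :: [c, b] from by simp, getLast?_append_cons']
    rfl
  | cons β r' =>
    right
    exact ⟨β, ⟨s ++ [a], r', by simp⟩⟩

lemma mem_split_first {a : V} {l : List V} (h : a ∈ l) :
    ∃ s t, l = s ++ a :: t ∧ a ∉ s := by
  induction l with
  | nil => simp at h
  | cons b l ih =>
    by_cases hab : a = b
    · exact ⟨[], l, by simp [hab], by simp⟩
    · have : a ∈ l := by
        rcases List.mem_cons.1 h with h' | h'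
        · exact absurd h' hab
        · exact h'
      obtain ⟨s, t, rfl, hns⟩ := ih this
      exact ⟨b :: s, t, by simp, by simp [hab, hns]⟩

lemma mem_split_last {a : V} {l : List V} (h : a ∈ l) :
    ∃ s t, l = s ++ a :: t ∧ a ∉ t := by
  induction l with
  | nil => simp at h
  | cons b l ih =>
    by_cases hal : a ∈ l
    · obtain ⟨s, t, rfl, hnt⟩ := ih hal
      exact ⟨b :: s, t, by simp, hnt⟩
    · have hab : a = b := by
        rcases List.mem_cons.1 h with h' | h'
        · exact h'
        · exact absurd h' hal
      exact ⟨[], l, by simp [hab], hal⟩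

lemma mem_dropLast_split {z : V} {l : List V} (h : z ∈ l.dropLast) :
    ∃ s t, l = s ++ z :: t ∧ t ≠ [] := by
  rcases List.eq_nil_or_concat l with rfl | ⟨L, b, rfl⟩
  · simp at h
  · rw [List.concat_eq_append, List.dropLast_concat] at h
    obtain ⟨s, t, rfl⟩ := List.append_of_mem h
    exact ⟨s, t ++ [b], by simp, by simp⟩

lemma intmid {w c : V} {l r : List V} (h : w ∈ l.tail) :
    ∃ a b, [a,w,b] <:+: (l ++ c :: r) := by
  cases l with
  | nil => simp at h
  | cons h0 t =>
    simp only [List.tail_cons] at h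
    obtain ⟨s, t2, rfl⟩ := List.append_of_mem h
    rcases List.eq_nil_or_concat (h0 :: s) with h' | ⟨L, α, hL⟩
    · simp at h'
    · have hmain : (h0 :: (s ++ w :: t2)) ++ c :: r = L ++ α :: w :: (t2 ++ c :: r) := by
        rw [show (h0 :: (s ++ w :: t2)) ++ c :: r = (h0 :: s) ++ w :: (t2 ++ c :: r) from by simp,
          hL]
        simp
      cases t2 with
      | nil =>
        refine ⟨α, c, L, r, ?_⟩
        rw [hmain]; simp
      | cons b t2' =>
        refine ⟨α, b, L, t2' ++ c :: r, ?_⟩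
        rw [hmain]; simp

lemma intmid2 {w c : V} {l r : List V} (h : w ∈ r.dropLast) :
    ∃ a b, [a,w,b] <:+: (l ++ c :: r) := by
  obtain ⟨s, t, rfl, hte⟩ := mem_dropLast_split h
  rcases List.eq_nil_or_concat (l ++ c :: s) with h' | ⟨L, α, hL⟩
  · simp at h'
  · cases t with
    | nil => exact absurd rfl hte
    | cons b t' =>
      refine ⟨α, b, L, t', ?_⟩
      rw [show l ++ c :: (s ++ w :: b :: t') = (l ++ c :: s) ++ w :: b :: t' from by simp, hL]
      simp


-- transfer2: triples after removing collider c (a ≠ b case)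
lemma transfer2 : ∀ (l : List V) (a c b : V) (r : List V) (α w β : V),
    [α,w,β] <:+: (l ++ a :: b :: r) →
    [α,w,β] <:+: (l ++ a :: c :: b :: r) ∨
    (w = a ∧ β = b ∧ [α,a,c] <:+: (l ++ a :: c :: b :: r)) ∨
    (w = b ∧ α = a ∧ [c,b,β] <:+: (l ++ a :: c :: b :: r)) := by
  intro l
  induction l with
  | nil =>
    intro a c b r α w β h
    rcases List.infix_cons_iff.1 h with hpre | hinf
    · obtain ⟨t, ht⟩ := hpre
      simp only [List.cons_append, List.append_nil, List.nil_append, List.cons.injEq] at ht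
      obtain ⟨rfl, rfl, rfl⟩ := ht
      right; right
      exact ⟨rfl, rfl, ⟨[α], t, by simp⟩⟩
    · left
      exact infix_cons_lift (hinf.trans ⟨[c], [], by simp⟩)
  | cons h0 t ih =>
    intro a c b r α w β h
    rcases List.infix_cons_iff.1 h with hpre | hinf
    · obtain ⟨s, hs⟩ := hpre
      simp only [List.cons_append, List.nil_append, List.cons.injEq] at hs
      obtain ⟨rfl, hs⟩ := hs
      cases t with
      | nil =>
        simp only [List.append_eq, List.nil_append, List.cons.injEq] at hs
        obtain ⟨rfl, rfl, rfl⟩ := hs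
        right; left
        exact ⟨rfl, rfl, ⟨[], β :: s, by simp⟩⟩
      | cons t0 t' =>
        simp only [List.append_eq, List.cons_append, List.cons.injEq] at hs
        obtain ⟨rfl, hs⟩ := hs
        left
        cases t' with
        | nil =>
          simp only [List.append_eq, List.nil_append, List.cons.injEq] at hs
          obtain ⟨rfl, rfl⟩ := hs
          exact ⟨[], c :: b :: r, by simp⟩
        | cons t1 t'' =>
          simp only [List.append_eq, List.cons_append, List.cons.injEq] at hs
          obtain ⟨rfl, hs⟩ := hs
          exact ⟨[], t'' ++ a :: c :: b :: r, by simp⟩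
    · rcases ih a c b r α w β hinf with h1 | h2 | h3
      · exact Or.inl (infix_cons_lift h1)
      · exact Or.inr (Or.inl ⟨h2.1, h2.2.1, infix_cons_lift h2.2.2⟩)
      · exact Or.inr (Or.inr ⟨h3.1, h3.2.1, infix_cons_lift h3.2.2⟩)

-- transfer1: removing collider c with equal neighbors (a = b)
lemma transfer1 : ∀ (l : List V) (a c : V) (r : List V) (α w β : V),
    [α,w,β] <:+: (l ++ a :: r) →
    [α,w,β] <:+: (l ++ a :: c :: a :: r) ∨
    (w = a ∧ [α,a,c] <:+: (l ++ a :: c :: a :: r) ∧ [c,a,β] <:+: (l ++ a :: c :: a :: r)) := by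
  intro l
  induction l with
  | nil =>
    intro a c r α w β h
    rcases List.infix_cons_iff.1 h with hpre | hinf
    · obtain ⟨t, ht⟩ := hpre
      simp only [List.cons_append, List.append_nil, List.nil_append, List.cons.injEq] at ht
      obtain ⟨rfl, rfl⟩ := ht
      left
      exact ⟨[α, c], t, by simp⟩
    · left
      exact infix_cons_lift (hinf.trans ⟨[c, a], [], by simp⟩)
  | cons h0 t ih =>
    intro a c r α w β h
    rcases List.infix_cons_iff.1 h with hpre | hinf
    · obtain ⟨s, hs⟩ := hpre
      simp only [List.cons_append, List.nil_append, List.cons.injEq] at hs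
      obtain ⟨rfl, hs⟩ := hs
      cases t with
      | nil =>
        simp only [List.append_eq, List.nil_append, List.cons.injEq] at hs
        obtain ⟨rfl, rfl⟩ := hs
        right
        exact ⟨rfl, ⟨[], w :: β :: s, by simp⟩, ⟨[α, w], s, by simp⟩⟩
      | cons t0 t' =>
        simp only [List.append_eq, List.cons_append, List.cons.injEq] at hs
        obtain ⟨rfl, hs⟩ := hs
        left
        cases t' with
        | nil =>
          simp only [List.append_eq, List.nil_append, List.cons.injEq] at hs
          obtain ⟨rfl, rfl⟩ := hs
          exact ⟨[], c :: β :: s, by simp⟩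
        | cons t1 t'' =>
          simp only [List.append_eq, List.cons_append, List.cons.injEq] at hs
          obtain ⟨rfl, hs⟩ := hs
          exact ⟨[], t'' ++ a :: c :: a :: r, by simp⟩
    · rcases ih a c r α w β hinf with h1 | h2
      · exact Or.inl (infix_cons_lift h1)
      · exact Or.inr ⟨h2.1, infix_cons_lift h2.2.1, infix_cons_lift h2.2.2⟩


variable {E : V → V → Prop}

lemma adj_symm {a b : V} (h : Adj E a b) : Adj E b a := h.symm

lemma chain'_adj_reverse {p : List V} (h : List.Chain' (Adj E) p) :
    List.Chain' (Adj E) p.reverse := by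
  show List.IsChain (Adj E) p.reverse
  rw [List.isChain_reverse]
  exact h.imp (fun a b hab => hab.symm)

lemma cf_reverse {p : List V} (h : CF E p) : CF E p.reverse := by
  intro a w b hinf
  have h2 : [b, w, a] <:+: p := by
    have := (List.reverse_infix (l₁ := [b,w,a]) (l₂ := p)).1
    apply this
    simpa using hinf
  intro ⟨h3, h4⟩
  exact h b w a h2 ⟨h4, h3⟩

lemma triple_reverse {a w b : V} {p : List V} (h : [a,w,b] <:+: p.reverse) :
    [b, w, a] <:+: p := by
  have := (List.reverse_infix (l₁ := [b,w,a]) (l₂ := p)).1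
  apply this
  simpa using h

lemma allR : ∀ (t : List V) (a b : V), List.Chain' (Adj E) (a :: b :: t) →
    CF E (a :: b :: t) → E a b → List.Chain' E (a :: b :: t) := by
  intro t
  induction t with
  | nil => intro a b _ _ hab; exact List.isChain_cons_cons.2 ⟨hab, by simp⟩
  | cons c t ih =>
    intro a b hch hcf hab
    have hnc : ¬ (E a b ∧ E c b) := hcf a b c ⟨[], t, rfl⟩
    have hbc : E b c := by
      rcases (List.isChain_cons_cons.1 hch).2 |> List.isChain_cons_cons.1 |>.1 with h | h
      · exact h
      · exact absurd ⟨hab, h⟩ hnc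
    have := ih b c (List.isChain_cons_cons.1 hch).2
      (fun x y z hinf => hcf x y z (infix_cons_lift hinf)) hbc
    exact List.isChain_cons_cons.2 ⟨hab, this⟩

lemma chainE_reflTransGen : ∀ (p : List V) (h : List.Chain' E p) (z : V), z ∈ p →
    ∀ g, p.getLast? = some g → Relation.ReflTransGen E z g := by
  intro p
  induction p with
  | nil => intro _ z hz; simp at hz
  | cons a t ih =>
    intro h z hz g hg
    cases t with
    | nil =>
      simp at hz hg
      subst hz; subst hg
      exact Relation.ReflTransGen.refl
    | cons b t' =>
      have hch := List.isChain_cons_cons.1 h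
      have hg' : (b :: t').getLast? = some g := by
        rw [show (a :: b :: t') = [a] ++ b :: t' from rfl, getLast?_append_cons'] at hg
        exact hg
      rcases List.mem_cons.1 hz with rfl | hz'
      · exact Relation.ReflTransGen.head hch.1 (ih hch.2 b (by simp) g hg')
      · exact ih hch.2 z hz' g hg'

lemma trekAnc : ∀ (p : List V), List.Chain' (Adj E) p → CF E p →
    ∀ h g, p.head? = some h → p.getLast? = some g →
    ∀ z ∈ p, Relation.ReflTransGen E z h ∨ Relation.ReflTransGen E z g := by
  intro p
  induction p with
  | nil => intro _ _ h g hh; simp at hh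
  | cons a t ih =>
    intro hch hcf h g hh hg z hz
    simp only [List.head?_cons, Option.some.injEq] at hh
    subst hh
    cases t with
    | nil =>
      simp at hz hg
      subst hz
      exact Or.inl Relation.ReflTransGen.refl
    | cons b t' =>
      have hch' := List.isChain_cons_cons.1 hch
      have hg' : (b :: t').getLast? = some g := by
        rw [show (a :: b :: t') = [a] ++ b :: t' from rfl, getLast?_append_cons'] at hg
        exact hg
      rcases hch'.1 with hEab | hEba
      · -- all forward: everything reaches g
        right
        exact chainE_reflTransGen _ (allR t' a b hch hcf hEab) z hz g hg
      · -- E b a : recurse on tail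
        rcases List.mem_cons.1 hz with rfl | hz'
        · exact Or.inl Relation.ReflTransGen.refl
        · have := ih hch'.2 (fun x y w hinf => hcf x y w (infix_cons_lift hinf)) b g rfl hg' z hz'
          rcases this with h1 | h2
          · exact Or.inl (h1.trans (Relation.ReflTransGen.single hEba))
          · exact Or.inr h2


lemma master (hacyc : AcyclicRel E) {S : Set V} (hS : PrefixSet E S) {u v : V}
    (hnov : ¬ ∃ a b c : V, c ∈ (AncI E u ∪ AncI E v) \ S ∧
      E a c ∧ E b c ∧ a ≠ b ∧ ¬ (E a b ∨ E b a))
    (hv : v ∉ S) (D : Set V) (hSD : S ⊆ D) (hDA : D ⊆ S ∪ (AncI E u ∪ AncI E v)) :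
    ∀ n (p : List V), p.length ≤ n → p.head? = some u → p.getLast? = some v →
      ActivePath E D p →
      ∃ q : List V, q.head? = some u ∧ q.getLast? = some v ∧ List.Chain' (Adj E) q ∧
        CF E q ∧ (∀ a w b, [a,w,b] <:+: q → w ∉ D) := by
  intro n
  induction n with
  | zero =>
    intro p hlen hh _ _
    cases p with
    | nil => simp at hh
    | cons a t => simp at hlen
  | succ n ih =>
    intro p hlen hh hl hact
    obtain ⟨hch, hc2, hc3⟩ := hact
    by_cases hex : ∃ a c b, [a,c,b] <:+: p ∧ E a c ∧ E b c
    · obtain ⟨a, c, b, hinf, hac, hbc⟩ := hex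
      obtain ⟨d, hdD, hcd⟩ := hc3 a c b hinf hac hbc
      have hcS : c ∉ S := by
        intro hcS
        have hbS : b ∈ S := hS c hcS b (Relation.TransGen.single hbc)
        rcases nbrR hinf with hlast | ⟨β, hβ⟩
        · rw [hl] at hlast
          have hvb : v = b := by injection hlast
          exact hv (hvb ▸ hbS)
        · have hEcb : ¬ E c b := fun h' => hacyc c (Relation.TransGen.head h' (Relation.TransGen.single hbc))
          exact hc2 c b β hβ (fun hcol => hEcb hcol.1) (hSD hbS)
      have hcA : c ∈ (AncI E u ∪ AncI E v) := by
        rcases hDA hdD with hdS | hdA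
        · exfalso
          rcases Relation.reflTransGen_iff_eq_or_transGen.1 hcd with heq | htg
          · exact hcS (heq ▸ hdS)
          · exact hcS (hS d hdS c htg)
        · rcases hdA with hdu | hdv
          · exact Or.inl (hcd.trans hdu)
          · exact Or.inr (hcd.trans hdv)
      obtain ⟨l, r, hp⟩ := hinf
      have hp' : p = l ++ a :: c :: b :: r := by rw [← hp]; simp
      subst hp'
      have hlen3 : l.length + r.length + 3 ≤ n + 1 := by
        simp only [List.length_append, List.length_cons] at hlen; omega
      have hEca : ¬ E c a := fun h' => hacyc a (Relation.TransGen.head hac (Relation.TransGen.single h'))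
      have hdesc : ∃ d' ∈ D, Relation.ReflTransGen E a d' :=
        ⟨d, hdD, Relation.ReflTransGen.head hac hcd⟩
      have hdescb : ∃ d' ∈ D, Relation.ReflTransGen E b d' :=
        ⟨d, hdD, Relation.ReflTransGen.head hbc hcd⟩
      by_cases hab : a = b
      · subst hab
        set q0 : List V := l ++ a :: r with hq0
        have hhead : q0.head? = some u := by
          rw [hq0, head?_mid l a r (c :: a :: r)]
          exact hh
        have hlast : q0.getLast? = some v := by
          rw [hq0, show l ++ a :: r = l ++ a :: r from rfl]
          rw [getLast?_append_cons' l a r]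
          rw [show l ++ a :: c :: a :: r = (l ++ [a,c]) ++ a :: r from by simp,
            getLast?_append_cons' (l ++ [a,c]) a r] at hl
          exact hl
        have hchl : List.Chain' (Adj E) (l ++ [a]) :=
          hch.prefix ⟨c :: a :: r, by simp⟩
        have hchr : List.Chain' (Adj E) (a :: r) :=
          hch.suffix ⟨l ++ [a, c], by simp⟩
        have hchain : List.Chain' (Adj E) q0 := by
          rw [hq0, show l ++ a :: r = l ++ (a :: r) from rfl]
          refine List.isChain_append.2 ⟨hchl.prefix ⟨[a], by simp⟩, hchr, ?_⟩
          intro x hx y hy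
          simp only [List.head?_cons, Option.mem_def, Option.some.injEq] at hy
          subst hy
          have := (List.isChain_append.1 hchl).2.2
          exact this x hx a (by simp)
        have hcond2 : ∀ x w y, [x,w,y] <:+: q0 → ¬(E x w ∧ E y w) → w ∉ D := by
          intro x w y hinf hnc
          rcases transfer1 l a c r x w y hinf with hold | ⟨rfl, hL, hR⟩
          · exact hc2 x w y hold hnc
          · exact hc2 x w c hL (fun hcol => hEca hcol.2)
        have hcond3 : ∀ x w y, [x,w,y] <:+: q0 → E x w → E y w →
            ∃ d' ∈ D, Relation.ReflTransGen E w d' := by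
          intro x w y hinf h1 h2
          rcases transfer1 l a c r x w y hinf with hold | ⟨rfl, hL, hR⟩
          · exact hc3 x w y hold h1 h2
          · exact hdesc
        exact ih q0 (by simp only [hq0, List.length_append, List.length_cons]; omega) hhead hlast ⟨hchain, hcond2, hcond3⟩
      · have hAdj : E a b ∨ E b a := by
          by_contra h'
          exact hnov ⟨a, b, c, ⟨hcA, hcS⟩, hac, hbc, hab, h'⟩
        have hEcb : ¬ E c b := fun h' => hacyc b (Relation.TransGen.head hbc (Relation.TransGen.single h'))
        set q0 : List V := l ++ a :: b :: r with hq0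
        have hhead : q0.head? = some u := by
          rw [hq0, head?_mid l a (b :: r) (c :: b :: r)]
          exact hh
        have hlast : q0.getLast? = some v := by
          rw [hq0, show l ++ a :: b :: r = (l ++ [a]) ++ b :: r from by simp,
            getLast?_append_cons' (l ++ [a]) b r]
          rw [show l ++ a :: c :: b :: r = (l ++ [a,c]) ++ b :: r from by simp,
            getLast?_append_cons' (l ++ [a,c]) b r] at hl
          exact hl
        have hchl : List.Chain' (Adj E) (l ++ [a]) :=
          hch.prefix ⟨c :: b :: r, by simp⟩
        have hchr : List.Chain' (Adj E) (b :: r) :=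
          hch.suffix ⟨l ++ [a, c], by simp⟩
        have hchain : List.Chain' (Adj E) q0 := by
          rw [hq0, show l ++ a :: b :: r = (l ++ [a]) ++ (b :: r) from by simp]
          refine List.isChain_append.2 ⟨hchl, hchr, ?_⟩
          intro x hx y hy
          simp only [List.getLast?_append, Option.mem_def] at hx
          simp only [List.head?_cons, Option.mem_def, Option.some.injEq] at hy
          subst hy
          have hxa : a = x := by simpa using hx
          subst hxa
          exact hAdj
        have hcond2 : ∀ x w y, [x,w,y] <:+: q0 → ¬(E x w ∧ E y w) → w ∉ D := by
          intro x w y hinf hnc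
          rcases transfer2 l a c b r x w y hinf with hold | ⟨rfl, rfl, hL⟩ | ⟨rfl, rfl, hR⟩
          · exact hc2 x w y hold hnc
          · exact hc2 x w c hL (fun hcol => hEca hcol.2)
          · exact hc2 c w y hR (fun hcol => hEcb hcol.1)
        have hcond3 : ∀ x w y, [x,w,y] <:+: q0 → E x w → E y w →
            ∃ d' ∈ D, Relation.ReflTransGen E w d' := by
          intro x w y hinf h1 h2
          rcases transfer2 l a c b r x w y hinf with hold | ⟨rfl, rfl, hL⟩ | ⟨rfl, rfl, hR⟩
          · exact hc3 x w y hold h1 h2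
          · exact hdesc
          · exact hdescb
        exact ih q0 (by simp only [hq0, List.length_append, List.length_cons]; omega) hhead hlast ⟨hchain, hcond2, hcond3⟩
    · refine ⟨p, hh, hl, hch, ?_, ?_⟩
      · intro x y z hinf hcol
        exact hex ⟨x, y, z, hinf, hcol.1, hcol.2⟩
      · intro a w b hinf
        exact hc2 a w b hinf (fun hcol => hex ⟨a, w, b, hinf, hcol.1, hcol.2⟩)


lemma sc0 (hacyc : AcyclicRel E) {S : Set V} {u v : V}
    (hnov : ¬ ∃ a b c : V, c ∈ (AncI E u ∪ AncI E v) \ S ∧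
      E a c ∧ E b c ∧ a ≠ b ∧ ¬ (E a b ∨ E b a))
    (C : Set V) (A' : Set V)
    (hA'A : ∀ z ∈ A', z ∈ (AncI E u ∪ AncI E v) ∧ z ∉ S)
    (hA'C : ∀ z ∈ A', z ∉ C) :
    ∀ n (p : List V), p.length ≤ n → p.head? = some u → p.getLast? = some v →
      List.Chain' (Adj E) p → (∀ a w b, [a,w,b] <:+: p → w ∈ A') →
      DConn E C u v := by
  intro n
  induction n with
  | zero =>
    intro p hlen hh _ _ _
    cases p with
    | nil => simp at hh
    | cons a t => simp at hlen
  | succ n ih =>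
    intro p hlen hh hl hch hint
    by_cases hex : ∃ a c b, [a,c,b] <:+: p ∧ E a c ∧ E b c
    · obtain ⟨a, c, b, hinf, hac, hbc⟩ := hex
      have hcA' : c ∈ A' := hint a c b hinf
      have hcAS := hA'A c hcA'
      obtain ⟨l, r, hp⟩ := hinf
      have hp' : p = l ++ a :: c :: b :: r := by rw [← hp]; simp
      subst hp'
      have hlen3 : l.length + r.length + 3 ≤ n + 1 := by
        simp only [List.length_append, List.length_cons] at hlen; omega
      by_cases hab : a = b
      · subst hab
        set q0 : List V := l ++ a :: r with hq0
        have hhead : q0.head? = some u := by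
          rw [hq0, head?_mid l a r (c :: a :: r)]; exact hh
        have hlast : q0.getLast? = some v := by
          rw [hq0, getLast?_append_cons' l a r]
          rw [show l ++ a :: c :: a :: r = (l ++ [a,c]) ++ a :: r from by simp,
            getLast?_append_cons' (l ++ [a,c]) a r] at hl
          exact hl
        have hchl : List.Chain' (Adj E) (l ++ [a]) := hch.prefix ⟨c :: a :: r, by simp⟩
        have hchr : List.Chain' (Adj E) (a :: r) := hch.suffix ⟨l ++ [a, c], by simp⟩
        have hchain : List.Chain' (Adj E) q0 := by
          rw [hq0, show l ++ a :: r = l ++ (a :: r) from rfl]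
          refine List.isChain_append.2 ⟨hchl.prefix ⟨[a], by simp⟩, hchr, ?_⟩
          intro x hx y hy
          simp only [List.head?_cons, Option.mem_def, Option.some.injEq] at hy
          subst hy
          exact (List.isChain_append.1 hchl).2.2 x hx a (by simp)
        have hint' : ∀ x w y, [x,w,y] <:+: q0 → w ∈ A' := by
          intro x w y hinf
          rcases transfer1 l a c r x w y hinf with hold | ⟨rfl, hL, hR⟩
          · exact hint x w y hold
          · exact hint x w c hL
        exact ih q0 (by simp only [hq0, List.length_append, List.length_cons]; omega)
          hhead hlast hchain hint'
      · have hAdj : E a b ∨ E b a := by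
          by_contra h'
          exact hnov ⟨a, b, c, ⟨hcAS.1, hcAS.2⟩, hac, hbc, hab, h'⟩
        set q0 : List V := l ++ a :: b :: r with hq0
        have hhead : q0.head? = some u := by
          rw [hq0, head?_mid l a (b :: r) (c :: b :: r)]; exact hh
        have hlast : q0.getLast? = some v := by
          rw [hq0, show l ++ a :: b :: r = (l ++ [a]) ++ b :: r from by simp,
            getLast?_append_cons' (l ++ [a]) b r]
          rw [show l ++ a :: c :: b :: r = (l ++ [a,c]) ++ b :: r from by simp,
            getLast?_append_cons' (l ++ [a,c]) b r] at hl
          exact hl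
        have hchl : List.Chain' (Adj E) (l ++ [a]) := hch.prefix ⟨c :: b :: r, by simp⟩
        have hchr : List.Chain' (Adj E) (b :: r) := hch.suffix ⟨l ++ [a, c], by simp⟩
        have hchain : List.Chain' (Adj E) q0 := by
          rw [hq0, show l ++ a :: b :: r = (l ++ [a]) ++ (b :: r) from by simp]
          refine List.isChain_append.2 ⟨hchl, hchr, ?_⟩
          intro x hx y hy
          simp only [List.head?_cons, Option.mem_def, Option.some.injEq] at hy
          subst hy
          have hxa : a = x := by simpa using hx
          subst hxa
          exact hAdj
        have hint' : ∀ x w y, [x,w,y] <:+: q0 → w ∈ A' := by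
          intro x w y hinf
          rcases transfer2 l a c b r x w y hinf with hold | ⟨rfl, rfl, hL⟩ | ⟨rfl, rfl, hR⟩
          · exact hint x w y hold
          · exact hint x w c hL
          · exact hint c w y hR
        exact ih q0 (by simp only [hq0, List.length_append, List.length_cons]; omega)
          hhead hlast hchain hint'
    · refine ⟨p, hh, hl, hch, ?_, ?_⟩
      · intro a w b hinf _
        exact hA'C w (hint a w b hinf)
      · intro a w b hinf h1 h2
        exact absurd ⟨a, w, b, hinf, h1, h2⟩ hex

inductive Reach (E : V → V → Prop) (A' : Set V) (s : V) : V → Prop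
  | base : Reach E A' s s
  | step {z z'} : Reach E A' s z → z' ∈ A' → Adj E z z' → Reach E A' s z'

lemma reach_mem {A' : Set V} {s z : V} (h : Reach E A' s z) : z = s ∨ z ∈ A' := by
  cases h with
  | base => exact Or.inl rfl
  | step _ h2 _ => exact Or.inr h2

lemma reach_list {A' : Set V} {s z : V} (h : Reach E A' s z) :
    ∃ p : List V, List.Chain' (Adj E) p ∧ p.head? = some s ∧ p.getLast? = some z ∧
      ∀ w ∈ p.tail, w ∈ A' := by
  induction h with
  | base => exact ⟨[s], List.isChain_singleton s, rfl, rfl, by simp⟩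
  | @step z z' _ hz' hadj ih =>
    obtain ⟨p, hch, hh, hl, ht⟩ := ih
    have hpne : p ≠ [] := by rintro rfl; simp at hh
    refine ⟨p ++ [z'], ?_, ?_, by simp, ?_⟩
    · refine List.isChain_append.2 ⟨hch, by simp, ?_⟩
      intro x hx y hy
      simp only [Option.mem_def] at hx
      rw [hl] at hx
      injection hx with hx
      subst hx
      simp only [List.head?_cons, Option.mem_def, Option.some.injEq] at hy
      subst hy
      exact hadj
    · rw [List.head?_append, hh]; rfl
    · rw [List.tail_append_of_ne_nil hpne]
      intro w hw
      rcases List.mem_append.1 hw with h1 | h2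
      · exact ht w h1
      · simp at h2; subst h2; exact hz'

lemma walk_reach {A' : Set V} {s : V} :
    ∀ (t : List V) (z : V), Reach E A' s z → List.Chain' (Adj E) (z :: t) →
      (∀ w ∈ t, w ∈ A') → ∀ y ∈ z :: t, Reach E A' s y := by
  intro t
  induction t with
  | nil =>
    intro z hz _ _ y hy
    simp at hy; subst hy; exact hz
  | cons b t' ih =>
    intro z hz hch ht y hy
    have hzb : Reach E A' s b :=
      Reach.step hz (ht b (by simp)) (List.isChain_cons_cons.1 hch).1
    rcases List.mem_cons.1 hy with rfl | hy'
    · exact hz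
    · exact ih b hzb (List.isChain_cons_cons.1 hch).2 (fun w hw => ht w (by simp [hw])) y hy'


lemma hnov_adj {S : Set V} {u v : V}
    (hnov : ¬ ∃ a b c : V, c ∈ (AncI E u ∪ AncI E v) \ S ∧
      E a c ∧ E b c ∧ a ≠ b ∧ ¬ (E a b ∨ E b a))
    {a b c : V} (hcA : c ∈ (AncI E u ∪ AncI E v)) (hcS : c ∉ S)
    (hac : E a c) (hbc : E b c) : a = b ∨ Adj E a b := by
  by_cases hab : a = b
  · exact Or.inl hab
  · right
    by_contra h'
    exact hnov ⟨a, b, c, ⟨hcA, hcS⟩, hac, hbc, hab, h'⟩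

lemma shortcut {s : List V} {x y : V} {SS : Set V}
    (hch : List.Chain' (Adj E) s) (hh : s.head? = some x) (hl : s.getLast? = some y)
    (hint : ∀ a w b, [a,w,b] <:+: s → w ∈ SS)
    {a c b : V} (hinf : [a,c,b] <:+: s)
    (hAdjOrEq : a = b ∨ Adj E a b) :
    ∃ s' : List V, s'.length < s.length ∧ List.Chain' (Adj E) s' ∧ s'.head? = some x ∧
      s'.getLast? = some y ∧ (∀ a w b, [a,w,b] <:+: s' → w ∈ SS) := by
  obtain ⟨l, r, hp⟩ := hinf
  have hp' : s = l ++ a :: c :: b :: r := by rw [← hp]; simp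
  subst hp'
  rcases hAdjOrEq with hab | hAdj
  · subst hab
    refine ⟨l ++ a :: r, ?_, ?_, ?_, ?_, ?_⟩
    · simp only [List.length_append, List.length_cons]; omega
    · have hchl : List.Chain' (Adj E) (l ++ [a]) := hch.prefix ⟨c :: a :: r, by simp⟩
      have hchr : List.Chain' (Adj E) (a :: r) := hch.suffix ⟨l ++ [a, c], by simp⟩
      rw [show l ++ a :: r = l ++ (a :: r) from rfl]
      refine List.isChain_append.2 ⟨hchl.prefix ⟨[a], by simp⟩, hchr, ?_⟩
      intro p hp q hq
      simp only [List.head?_cons, Option.mem_def, Option.some.injEq] at hq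
      subst hq
      exact (List.isChain_append.1 hchl).2.2 p hp a (by simp)
    · rw [head?_mid l a r (c :: a :: r)]; exact hh
    · rw [getLast?_append_cons' l a r]
      rw [show l ++ a :: c :: a :: r = (l ++ [a,c]) ++ a :: r from by simp,
        getLast?_append_cons' (l ++ [a,c]) a r] at hl
      exact hl
    · intro p w q hinf'
      rcases transfer1 l a c r p w q hinf' with hold | ⟨rfl, hL, hR⟩
      · exact hint p w q hold
      · exact hint p w c hL
  · refine ⟨l ++ a :: b :: r, ?_, ?_, ?_, ?_, ?_⟩
    · simp only [List.length_append, List.length_cons]; omega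
    · have hchl : List.Chain' (Adj E) (l ++ [a]) := hch.prefix ⟨c :: b :: r, by simp⟩
      have hchr : List.Chain' (Adj E) (b :: r) := hch.suffix ⟨l ++ [a, c], by simp⟩
      rw [show l ++ a :: b :: r = (l ++ [a]) ++ (b :: r) from by simp]
      refine List.isChain_append.2 ⟨hchl, hchr, ?_⟩
      intro p hp q hq
      simp only [List.head?_cons, Option.mem_def, Option.some.injEq] at hq
      subst hq
      have hpa : a = p := by simpa using hp
      subst hpa
      exact hAdj
    · rw [head?_mid l a (b :: r) (c :: b :: r)]; exact hh
    · rw [show l ++ a :: b :: r = (l ++ [a]) ++ b :: r from by simp,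
        getLast?_append_cons' (l ++ [a]) b r]
      rw [show l ++ a :: c :: b :: r = (l ++ [a,c]) ++ b :: r from by simp,
        getLast?_append_cons' (l ++ [a,c]) b r] at hl
      exact hl
    · intro p w q hinf'
      rcases transfer2 l a c b r p w q hinf' with hold | ⟨rfl, rfl, hL⟩ | ⟨rfl, rfl, hR⟩
      · exact hint p w q hold
      · exact hint p w c hL
      · exact hint c w q hR


lemma claim (hacyc : AcyclicRel E) {S : Set V} (hS : PrefixSet E S) {u v : V}
    (hnov : ¬ ∃ a b c : V, c ∈ (AncI E u ∪ AncI E v) \ S ∧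
      E a c ∧ E b c ∧ a ≠ b ∧ ¬ (E a b ∨ E b a))
    (SU SV : Set V) (x y : V)
    (hSUm : ∀ z ∈ SU, z = u ∨ (z ∈ (AncI E u ∪ AncI E v) ∧ z ∉ S))
    (hSVm : ∀ z ∈ SV, z ∈ (AncI E u ∪ AncI E v) ∧ z ∉ S)
    (hNC : ∀ a ∈ SU, ∀ b ∈ SV, a ≠ b ∧ ¬ Adj E a b)
    (hxA : x ∈ (AncI E u ∪ AncI E v)) (hxS : x ∉ S)
    (hyA : y ∈ (AncI E u ∪ AncI E v)) (hyS : y ∉ S)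
    (hxy : x ≠ y) (hxyadj : ¬ (E x y ∨ E y x)) :
    ∀ n (s1 s2 : List V), s1.length + s2.length ≤ n →
      List.Chain' (Adj E) s1 → s1.head? = some x → s1.getLast? = some y →
      (∀ a w b, [a,w,b] <:+: s1 → w ∈ SU) →
      List.Chain' (Adj E) s2 → s2.head? = some x → s2.getLast? = some y →
      (∀ a w b, [a,w,b] <:+: s2 → w ∈ SV) →
      False := by
  intro n
  induction n with
  | zero =>
    intro s1 s2 hlen _ hh1 _ _ _ _ _ _
    cases s1 with
    | nil => simp at hh1
    | cons a t => simp only [List.length_cons] at hlen; omega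
  | succ n ih =>
    intro s1 s2 hlen hch1 hh1 hl1 hint1 hch2 hh2 hl2 hint2
    by_cases hex1 : ∃ a c b, [a,c,b] <:+: s1 ∧ E a c ∧ E b c
    · obtain ⟨a, c, b, hinf, hac, hbc⟩ := hex1
      have hcSU := hint1 a c b hinf
      have hcAS : c ∈ (AncI E u ∪ AncI E v) ∧ c ∉ S := by
        rcases hSUm c hcSU with rfl | hgood
        · refine ⟨Or.inl Relation.ReflTransGen.refl, ?_⟩
          intro hcS
          have haS : a ∉ S := by
            rcases nbrL hinf with hhead | ⟨α, hα⟩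
            · rw [hh1] at hhead
              have hxa : x = a := by injection hhead
              exact hxa ▸ hxS
            · rcases hSUm a (hint1 α a c hα) with rfl | hg
              · exact fun _ => hacyc a (Relation.TransGen.single hac)
              · exact hg.2
          exact haS (hS c hcS a (Relation.TransGen.single hac))
        · exact hgood
      obtain ⟨s1', hlt, hch', hh', hl', hint'⟩ :=
        shortcut hch1 hh1 hl1 hint1 hinf (hnov_adj hnov hcAS.1 hcAS.2 hac hbc)
      exact ih s1' s2 (by omega) hch' hh' hl' hint' hch2 hh2 hl2 hint2
    by_cases hex2 : ∃ a c b, [a,c,b] <:+: s2 ∧ E a c ∧ E b c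
    · obtain ⟨a, c, b, hinf, hac, hbc⟩ := hex2
      have hcAS := hSVm c (hint2 a c b hinf)
      obtain ⟨s2', hlt, hch', hh', hl', hint'⟩ :=
        shortcut hch2 hh2 hl2 hint2 hinf (hnov_adj hnov hcAS.1 hcAS.2 hac hbc)
      exact ih s1 s2' (by omega) hch1 hh1 hl1 hint1 hch' hh' hl' hint'
    -- both collider-free
    have hcf1 : CF E s1 := fun a w b hinf hcol => hex1 ⟨a, w, b, hinf, hcol.1, hcol.2⟩
    have hcf2 : CF E s2 := fun a w b hinf hcol => hex2 ⟨a, w, b, hinf, hcol.1, hcol.2⟩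
    -- decompose s1 = x :: d1 :: m1h :: m1t
    obtain ⟨t1, rfl⟩ : ∃ t, s1 = x :: t := by
      cases s1 with
      | nil => simp at hh1
      | cons a t => exact ⟨t, by injection hh1 with h; rw [h]⟩
    obtain ⟨d1, t1', rfl⟩ : ∃ d t', t1 = d :: t' := by
      cases t1 with
      | nil => exfalso; apply hxy; simpa using hl1
      | cons d t' => exact ⟨d, t', rfl⟩
    obtain ⟨m1h, m1t, rfl⟩ : ∃ mh mt, t1' = mh :: mt := by
      cases t1' with
      | nil =>
        exfalso
        have : d1 = y := by simpa using hl1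
        subst this
        exact hxyadj (List.isChain_cons_cons.1 hch1).1
      | cons mh mt => exact ⟨mh, mt, rfl⟩
    obtain ⟨t2, rfl⟩ : ∃ t, s2 = x :: t := by
      cases s2 with
      | nil => simp at hh2
      | cons a t => exact ⟨t, by injection hh2 with h; rw [h]⟩
    obtain ⟨d2, t2', rfl⟩ : ∃ d t', t2 = d :: t' := by
      cases t2 with
      | nil => exfalso; apply hxy; simpa using hl2
      | cons d t' => exact ⟨d, t', rfl⟩
    obtain ⟨m2h, m2t, rfl⟩ : ∃ mh mt, t2' = mh :: mt := by
      cases t2' with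
      | nil =>
        exfalso
        have : d2 = y := by simpa using hl2
        subst this
        exact hxyadj (List.isChain_cons_cons.1 hch2).1
      | cons mh mt => exact ⟨mh, mt, rfl⟩
    set s1 : List V := x :: d1 :: m1h :: m1t with hs1
    set s2 : List V := x :: d2 :: m2h :: m2t with hs2
    have hd1SU : d1 ∈ SU := hint1 x d1 m1h ⟨[], m1t, rfl⟩
    have hd2SV : d2 ∈ SV := hint2 x d2 m2h ⟨[], m2t, rfl⟩
    -- reverse decompositions
    have hch1r : List.Chain' (Adj E) s1.reverse := chain'_adj_reverse hch1
    have hch2r : List.Chain' (Adj E) s2.reverse := chain'_adj_reverse hch2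
    have hcf1r : CF E s1.reverse := cf_reverse hcf1
    have hcf2r : CF E s2.reverse := cf_reverse hcf2
    have hh1r : s1.reverse.head? = some y := by rw [List.head?_reverse]; exact hl1
    have hl1r : s1.reverse.getLast? = some x := by rw [List.getLast?_reverse]; exact hh1
    have hh2r : s2.reverse.head? = some y := by rw [List.head?_reverse]; exact hl2
    have hl2r : s2.reverse.getLast? = some x := by rw [List.getLast?_reverse]; exact hh2
    obtain ⟨c1, n1h, n1t, hr1⟩ : ∃ c nh nt, s1.reverse = y :: c :: nh :: nt := by
      rcases hrv : s1.reverse with _ | ⟨a, t⟩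
      · rw [hrv] at hh1r; simp at hh1r
      · have ha : a = y := by rw [hrv] at hh1r; simpa using hh1r
        subst ha
        cases t with
        | nil =>
          exfalso; apply hxy
          rw [hrv] at hl1r; simpa using hl1r.symm
        | cons c t' =>
          cases t' with
          | nil =>
            exfalso
            have := congrArg List.length hrv
            simp [hs1] at this
          | cons nh nt => exact ⟨c, nh, nt, rfl⟩
    obtain ⟨c2, n2h, n2t, hr2⟩ : ∃ c nh nt, s2.reverse = y :: c :: nh :: nt := by
      rcases hrv : s2.reverse with _ | ⟨a, t⟩
      · rw [hrv] at hh2r; simp at hh2r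
      · have ha : a = y := by rw [hrv] at hh2r; simpa using hh2r
        subst ha
        cases t with
        | nil =>
          exfalso; apply hxy
          rw [hrv] at hl2r; simpa using hl2r.symm
        | cons c t' =>
          cases t' with
          | nil =>
            exfalso
            have := congrArg List.length hrv
            simp [hs2] at this
          | cons nh nt => exact ⟨c, nh, nt, rfl⟩
    have hc1SU : c1 ∈ SU := by
      have : [y, c1, n1h] <:+: s1.reverse := ⟨[], n1t, by rw [hr1]; simp⟩
      exact hint1 n1h c1 y (triple_reverse this)
    have hc2SV : c2 ∈ SV := by
      have : [y, c2, n2h] <:+: s2.reverse := ⟨[], n2t, by rw [hr2]; simp⟩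
      exact hint2 n2h c2 y (triple_reverse this)
    have hadjyc1 : Adj E y c1 := by
      rw [hr1] at hch1r
      exact (List.isChain_cons_cons.1 hch1r).1
    have hadjyc2 : Adj E y c2 := by
      rw [hr2] at hch2r
      exact (List.isChain_cons_cons.1 hch2r).1
    have hadjxd1 : Adj E x d1 := (List.isChain_cons_cons.1 hch1).1
    have hadjxd2 : Adj E x d2 := (List.isChain_cons_cons.1 hch2).1
    -- helper: from E y c (reverse first edge forward) get TransGen E y x and E d x
    have side1 : E y c1 → Relation.TransGen E y x ∧ E d1 x := by
      intro hyc
      have hchE : List.Chain' E s1.reverse := by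
        rw [hr1]
        rw [hr1] at hch1r hcf1r
        exact allR (n1h :: n1t) y c1 hch1r hcf1r hyc
      constructor
      · have hrt : Relation.ReflTransGen E y x :=
          chainE_reflTransGen s1.reverse hchE y (by rw [hr1]; simp) x hl1r
        rcases Relation.reflTransGen_iff_eq_or_transGen.1 hrt with heq | htg
        · exact absurd heq hxy
        · exact htg
      · have : List.Chain' (flip E) s1 := (List.isChain_reverse).1 hchE
        exact (List.isChain_cons_cons.1 this).1
    have side2 : E y c2 → Relation.TransGen E y x ∧ E d2 x := by
      intro hyc
      have hchE : List.Chain' E s2.reverse := by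
        rw [hr2]
        rw [hr2] at hch2r hcf2r
        exact allR (n2h :: n2t) y c2 hch2r hcf2r hyc
      constructor
      · have hrt : Relation.ReflTransGen E y x :=
          chainE_reflTransGen s2.reverse hchE y (by rw [hr2]; simp) x hl2r
        rcases Relation.reflTransGen_iff_eq_or_transGen.1 hrt with heq | htg
        · exact absurd heq hxy
        · exact htg
      · have : List.Chain' (flip E) s2 := (List.isChain_reverse).1 hchE
        exact (List.isChain_cons_cons.1 this).1
    have xcollider : E d1 x → E d2 x → False := by
      intro h1 h2
      rcases hnov_adj hnov hxA hxS h1 h2 with heq | hadj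
      · exact (hNC d1 hd1SU d2 hd2SV).1 heq
      · exact (hNC d1 hd1SU d2 hd2SV).2 hadj
    rcases hadjyc1 with hEyc1 | hEc1y
    · -- s1 reverse is forward directed: y ⇝ x
      obtain ⟨T1, hEd1x⟩ := side1 hEyc1
      rcases hadjxd2 with hExd2 | hEd2x
      · -- s2 forward directed: x ⇝ y : cycle
        have hchE2 : List.Chain' E s2 := allR (m2h :: m2t) x d2 hch2 hcf2 hExd2
        have hrt : Relation.ReflTransGen E x y :=
          chainE_reflTransGen s2 hchE2 x (by simp [hs2]) y hl2
        exact hacyc y (Relation.TransGen.trans_left T1 hrt)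
      · exact xcollider hEd1x hEd2x
    · rcases hadjyc2 with hEyc2 | hEc2y
      · obtain ⟨T2, hEd2x⟩ := side2 hEyc2
        rcases hadjxd1 with hExd1 | hEd1x
        · have hchE1 : List.Chain' E s1 := allR (m1h :: m1t) x d1 hch1 hcf1 hExd1
          have hrt : Relation.ReflTransGen E x y :=
            chainE_reflTransGen s1 hchE1 x (by simp [hs1]) y hl1
          exact hacyc y (Relation.TransGen.trans_left T2 hrt)
        · exact xcollider hEd1x hEd2x
      · -- collider at y
        rcases hnov_adj hnov hyA hyS hEc1y hEc2y with heq | hadj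
        · exact (hNC c1 hc1SU c2 hc2SV).1 heq
        · exact (hNC c1 hc1SU c2 hc2SV).2 hadj


lemma mem_dropLast_of_mem_reverse_tail {w : V} {l : List V} (h : w ∈ l.reverse.tail) :
    w ∈ l.dropLast := by
  rcases List.eq_nil_or_concat l with rfl | ⟨L, b, rfl⟩
  · simp at h
  · simp only [List.concat_eq_append, List.reverse_append, List.reverse_cons,
      List.reverse_nil, List.nil_append, List.singleton_append, List.tail_cons] at h
    rw [List.concat_eq_append, List.dropLast_concat]
    simpa using h

lemma mem_of_getLast? {a : V} {l : List V} (h : l.getLast? = some a) : a ∈ l := by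
  rcases List.eq_nil_or_concat l with rfl | ⟨L, b, rfl⟩
  · simp at h
  · rw [List.concat_eq_append] at h ⊢
    have : b = a := by simpa using h
    simp [this]

lemma mem_of_head? {a : V} {l : List V} (h : l.head? = some a) : a ∈ l := by
  cases l with
  | nil => simp at h
  | cons b t => simp at h; simp [h]

lemma getLast?_cons_of_ne_nil {a : V} {l : List V} (h : l ≠ []) :
    (a :: l).getLast? = l.getLast? := by
  cases l with
  | nil => exact absurd rfl h
  | cons b t => exact getLast?_append_cons' [a] b t

end St18

open St18 in
/-- If `(Anc[u] ∪ Anc[v]) \ S` contains no collider of a v-structure, then any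
cardinality-minimal set `W ⊆ V \ S` with `u ⫫ v ∣ S ∪ W` is a clique in `G`. -/
theorem stmt_18 {V : Type*} [Fintype V] (E : V → V → Prop) (hacyc : AcyclicRel E)
    (S : Set V) (hS : PrefixSet E S)
    (u v : V) (huv : u ≠ v) (hnadj : ¬ (E u v ∨ E v u)) (hv : v ∈ Sᶜ)
    (hnov : ¬ ∃ a b c : V, c ∈ (AncI E u ∪ AncI E v) \ S ∧
      E a c ∧ E b c ∧ a ≠ b ∧ ¬ (E a b ∨ E b a))
    (W : Set V) (hW : W ⊆ Sᶜ)
    (hsep : DSep E (S ∪ W) u v)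
    (hmin : ∀ W' ⊆ Sᶜ, W'.ncard < W.ncard → ¬ DSep E (S ∪ W') u v) :
    ∀ x ∈ W, ∀ y ∈ W, x ≠ y → (E x y ∨ E y x) := by
  classical
  intro x hx y hy hxyne
  by_contra hxyadj
  have hsep' : ¬ DConn E (S ∪ W) u v := hsep
  have hvS : v ∉ S := hv
  have hconn : ∀ W' : Set V, W' ⊆ Sᶜ → W'.ncard < W.ncard → DConn E (S ∪ W') u v :=
    fun W' h1 h2 => not_not.mp (hmin W' h1 h2)
  have masterD : ∀ D : Set V, S ⊆ D → D ⊆ S ∪ (AncI E u ∪ AncI E v) → DConn E D u v →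
      ∃ q : List V, q.head? = some u ∧ q.getLast? = some v ∧ List.Chain' (Adj E) q ∧
        CF E q ∧ (∀ a w b, [a,w,b] <:+: q → w ∉ D) := by
    rintro D h1 h2 ⟨p, hh, hl, hact⟩
    exact master hacyc hS hnov hvS D h1 h2 p.length p le_rfl hh hl hact
  -- Step 1 : W ⊆ AncI u ∪ AncI v
  have hWA : W ⊆ AncI E u ∪ AncI E v := by
    by_contra hnot
    obtain ⟨w0, hw0W, hw0A⟩ := Set.not_subset.1 hnot
    have hW0sub : W ∩ (AncI E u ∪ AncI E v) ⊂ W := by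
      refine ⟨Set.inter_subset_left, fun hsub => hw0A ?_⟩
      exact (hsub hw0W).2
    obtain ⟨q, hqh, hql, hqch, hqcf, hqnd⟩ := masterD (S ∪ (W ∩ (AncI E u ∪ AncI E v)))
      Set.subset_union_left
      (fun z hz => by
        rcases hz with h | h
        · exact Or.inl h
        · exact Or.inr h.2)
      (hconn _ (fun z hz => hW hz.1) (Set.ncard_lt_ncard hW0sub (Set.toFinite W)))
    apply hsep'
    refine ⟨q, hqh, hql, hqch, ?_, ?_⟩
    · intro a w b hinf _
      have hwD := hqnd a w b hinf
      have hwA : w ∈ AncI E u ∪ AncI E v := by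
        rcases trekAnc q hqch hqcf u v hqh hql w (hinf.subset (by simp)) with h1 | h1
        · exact Or.inl h1
        · exact Or.inr h1
      intro hwC
      rcases hwC with hwS | hwW
      · exact hwD (Or.inl hwS)
      · exact hwD (Or.inr ⟨hwW, hwA⟩)
    · intro a w b hinf h1 h2
      exact absurd ⟨h1, h2⟩ (hqcf a w b hinf)
  have hCA : ∀ z, z ∈ S ∪ W → z ∈ S ∪ (AncI E u ∪ AncI E v) := by
    intro z hz
    rcases hz with h | h
    · exact Or.inl h
    · exact Or.inr (hWA h)
  -- Step 2 : u ∉ W and v ∉ W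
  have huW : u ∉ W := by
    intro huW
    obtain ⟨q, hqh, hql, hqch, hqcf, hqnd⟩ := masterD (S ∪ (W \ {u}))
      Set.subset_union_left
      (fun z hz => by
        rcases hz with h | h
        · exact Or.inl h
        · exact hCA z (Or.inr h.1))
      (hconn _ (fun z hz => hW hz.1) (by
        have := Set.ncard_diff_singleton_lt_of_mem huW (Set.toFinite W)
        exact this))
    obtain ⟨l, r, hql', hur⟩ := mem_split_last (mem_of_head? hqh)
    apply hsep'
    refine ⟨u :: r, by simp, ?_, ?_, ?_, ?_⟩
    · rw [hql', getLast?_append_cons'] at hql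
      exact hql
    · exact hqch.suffix ⟨l, hql'.symm⟩
    · intro a w b hinf _
      have hinfq : [a,w,b] <:+: q := hinf.trans ⟨l, [], by simp [hql']⟩
      have hwD := hqnd a w b hinfq
      have hwne : w ≠ u := fun h => hur (h ▸ mem_tail_of_triple hinf)
      intro hwC
      rcases hwC with hwS | hwW
      · exact hwD (Or.inl hwS)
      · exact hwD (Or.inr ⟨hwW, hwne⟩)
    · intro a w b hinf h1 h2
      exact absurd ⟨h1, h2⟩ (hqcf a w b (hinf.trans ⟨l, [], by simp [hql']⟩))
  have hvW : v ∉ W := by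
    intro hvW
    obtain ⟨q, hqh, hql, hqch, hqcf, hqnd⟩ := masterD (S ∪ (W \ {v}))
      Set.subset_union_left
      (fun z hz => by
        rcases hz with h | h
        · exact Or.inl h
        · exact hCA z (Or.inr h.1))
      (hconn _ (fun z hz => hW hz.1) (Set.ncard_diff_singleton_lt_of_mem hvW (Set.toFinite W)))
    obtain ⟨l, r, hql', hvl⟩ := mem_split_first (mem_of_getLast? hql)
    apply hsep'
    have hpre : (l ++ [v]) <:+: q := ⟨[], r, by simp [hql']⟩
    refine ⟨l ++ [v], ?_, by simp, ?_, ?_, ?_⟩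
    · rw [head?_mid l v [] r]
      rw [← hql']
      exact hqh
    · exact hqch.prefix ⟨r, by rw [hql']; simp⟩
    · intro a w b hinf _
      have hwD := hqnd a w b (hinf.trans hpre)
      have hwne : w ≠ v := by
        intro h
        apply hvl
        have := mem_dropLast_of_triple hinf
        rw [List.dropLast_concat] at this
        exact h ▸ this
      intro hwC
      rcases hwC with hwS | hwW
      · exact hwD (Or.inl hwS)
      · exact hwD (Or.inr ⟨hwW, hwne⟩)
    · intro a w b hinf h1 h2
      exact absurd ⟨h1, h2⟩ (hqcf a w b (hinf.trans hpre))
  -- basic facts about x and y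
  have hxS : x ∉ S := hW hx
  have hyS : y ∉ S := hW hy
  have hxA : x ∈ AncI E u ∪ AncI E v := hWA hx
  have hyA : y ∈ AncI E u ∪ AncI E v := hWA hy
  have hxu : x ≠ u := fun h => huW (h ▸ hx)
  have hxv : x ≠ v := fun h => hvW (h ▸ hx)
  have hyu : y ≠ u := fun h => huW (h ▸ hy)
  have hyv : y ≠ v := fun h => hvW (h ▸ hy)
  -- the collider-free active walk through a given w ∈ W
  have getWalk : ∀ w ∈ W, ∃ p : List V, p.head? = some u ∧ p.getLast? = some v ∧
      List.Chain' (Adj E) p ∧ CF E p ∧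
      (∀ a z b, [a,z,b] <:+: p → z ∉ S ∪ (W \ {w})) ∧ (∃ α β, [α, w, β] <:+: p) := by
    intro w hwW
    obtain ⟨p, hph, hpl, hpch, hpcf, hpnd⟩ := masterD (S ∪ (W \ {w}))
      Set.subset_union_left
      (fun z hz => by
        rcases hz with h | h
        · exact Or.inl h
        · exact hCA z (Or.inr h.1))
      (hconn _ (fun z hz => hW hz.1) (Set.ncard_diff_singleton_lt_of_mem hwW (Set.toFinite W)))
    refine ⟨p, hph, hpl, hpch, hpcf, hpnd, ?_⟩
    by_contra hno
    push_neg at hno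
    apply hsep'
    refine ⟨p, hph, hpl, hpch, ?_, ?_⟩
    · intro a z b hinf _
      have hwD := hpnd a z b hinf
      intro hwC
      rcases hwC with hwS | hwWW
      · exact hwD (Or.inl hwS)
      · by_cases hzw : z = w
        · exact hno a b (hzw ▸ hinf)
        · exact hwD (Or.inr ⟨hwWW, hzw⟩)
    · intro a z b hinf h1 h2
      exact absurd ⟨h1, h2⟩ (hpcf a z b hinf)
  obtain ⟨p, hph, hpl, hpch, hpcf, hpnd, α0, β0, hpx⟩ := getWalk x hx
  obtain ⟨q, hqh, hql, hqch, hqcf, hqnd, α1, β1, hqy⟩ := getWalk y hy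
  -- interior classification
  have hpint : ∀ z, (∃ a b, [a,z,b] <:+: p) → z = x ∨
      (z ∈ AncI E u ∪ AncI E v ∧ z ∉ S ∪ W) := by
    rintro z ⟨a, b, hinf⟩
    by_cases hzx : z = x
    · exact Or.inl hzx
    · right
      have hwD := hpnd a z b hinf
      have hwA : z ∈ AncI E u ∪ AncI E v := by
        rcases trekAnc p hpch hpcf u v hph hpl z (hinf.subset (by simp)) with h1 | h1
        · exact Or.inl h1
        · exact Or.inr h1
      refine ⟨hwA, ?_⟩
      intro hwC
      rcases hwC with hwS | hwW
      · exact hwD (Or.inl hwS)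
      · exact hwD (Or.inr ⟨hwW, hzx⟩)
  have hqint : ∀ z, (∃ a b, [a,z,b] <:+: q) → z = y ∨
      (z ∈ AncI E u ∪ AncI E v ∧ z ∉ S ∪ W) := by
    rintro z ⟨a, b, hinf⟩
    by_cases hzy : z = y
    · exact Or.inl hzy
    · right
      have hwD := hqnd a z b hinf
      have hwA : z ∈ AncI E u ∪ AncI E v := by
        rcases trekAnc q hqch hqcf u v hqh hql z (hinf.subset (by simp)) with h1 | h1
        · exact Or.inl h1
        · exact Or.inr h1
      refine ⟨hwA, ?_⟩
      intro hwC
      rcases hwC with hwS | hwW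
      · exact hwD (Or.inl hwS)
      · exact hwD (Or.inr ⟨hwW, hzy⟩)
  -- split p at x
  obtain ⟨l1, r1, hp1, hxl1⟩ := mem_split_first (triple_mem hpx)
  obtain ⟨l2, r2, hp2, hxr2⟩ := mem_split_last (triple_mem hpx)
  obtain ⟨l1q, r1q, hq1, hyl1⟩ := mem_split_first (triple_mem hqy)
  obtain ⟨l2q, r2q, hq2, hyr2⟩ := mem_split_last (triple_mem hqy)
  -- the good region
  set A' : Set V := (AncI E u ∪ AncI E v) \ (S ∪ W) with hA'def
  have hvA' : v ∈ A' := ⟨Or.inr Relation.ReflTransGen.refl,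
    fun h => by rcases h with h | h; exact hvS h; exact hvW h⟩
  have hA'good : ∀ z ∈ A', z ∈ (AncI E u ∪ AncI E v) ∧ z ∉ S :=
    fun z hz => ⟨hz.1, fun h => hz.2 (Or.inl h)⟩
  -- u-side of p
  have hl1ne : l1 ≠ [] := by
    rintro rfl
    rw [hp1] at hph
    simp only [List.nil_append, List.head?_cons, Option.some.injEq] at hph
    exact hxu hph
  obtain ⟨lt1, rfl⟩ : ∃ t, l1 = u :: t := by
    cases l1 with
    | nil => exact absurd rfl hl1ne
    | cons a t =>
      refine ⟨t, ?_⟩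
      rw [hp1] at hph
      simp only [List.cons_append, List.head?_cons, Option.some.injEq] at hph
      rw [hph]
  have hl1chain : List.Chain' (Adj E) (u :: lt1) := hpch.prefix ⟨x :: r1, hp1.symm⟩
  have hl1tail : ∀ w ∈ lt1, w ∈ A' := by
    intro w hw
    have hint : ∃ a b, [a,w,b] <:+: p := by
      rw [hp1]
      exact intmid (show w ∈ (u :: lt1).tail from hw)
    rcases hpint w hint with rfl | hgood
    · exact absurd (List.mem_cons_of_mem u hw) hxl1
    · exact ⟨hgood.1, hgood.2⟩
  have hl1reach : ∀ z ∈ (u :: lt1), Reach E A' u z :=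
    walk_reach lt1 u Reach.base hl1chain hl1tail
  -- v-side of p
  have hr2ne : r2 ≠ [] := by
    rintro rfl
    rw [hp2, getLast?_append_cons'] at hpl
    simp only [List.getLast?_singleton, Option.some.injEq] at hpl
    exact hxv hpl
  have hxr2chain : List.Chain' (Adj E) (x :: r2) := hpch.suffix ⟨l2, hp2.symm⟩
  have hr2last : r2.getLast? = some v := by
    rw [hp2, getLast?_append_cons', getLast?_cons_of_ne_nil hr2ne] at hpl
    exact hpl
  have hr2chain : List.Chain' (Adj E) r2 := hxr2chain.tail
  have hr2revchain := chain'_adj_reverse hr2chain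
  have hr2revhead : r2.reverse.head? = some v := by
    rw [List.head?_reverse]; exact hr2last
  have hr2revtail : ∀ w ∈ r2.reverse.tail, w ∈ A' := by
    intro w hw
    have hwdl : w ∈ r2.dropLast := mem_dropLast_of_mem_reverse_tail hw
    have hint : ∃ a b, [a,w,b] <:+: p := by
      rw [hp2]
      exact intmid2 hwdl
    rcases hpint w hint with rfl | hgood
    · exact absurd ((List.dropLast_sublist r2).subset hwdl) hxr2
    · exact ⟨hgood.1, hgood.2⟩
  have hr2reach : ∀ z ∈ r2, Reach E A' v z := by
    intro z hz
    have hrev : ∀ z' ∈ r2.reverse, Reach E A' v z' := by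
      rcases hr : r2.reverse with _ | ⟨rh, rt⟩
      · intro z' hz'; simp at hz'
      · have hrh : rh = v := by
          rw [hr] at hr2revhead
          simpa using hr2revhead
        rw [hrh] at hr
        rw [hrh]
        rw [hr] at hr2revchain hr2revtail
        exact walk_reach rt v Reach.base hr2revchain (by simpa using hr2revtail)
    exact hrev z (List.mem_reverse.2 hz)
  -- u-side of q
  have hl1qne : l1q ≠ [] := by
    rintro rfl
    rw [hq1] at hqh
    simp only [List.nil_append, List.head?_cons, Option.some.injEq] at hqh
    exact hyu hqh
  obtain ⟨lt1q, rfl⟩ : ∃ t, l1q = u :: t := by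
    cases l1q with
    | nil => exact absurd rfl hl1qne
    | cons a t =>
      refine ⟨t, ?_⟩
      rw [hq1] at hqh
      simp only [List.cons_append, List.head?_cons, Option.some.injEq] at hqh
      rw [hqh]
  have hl1qchain : List.Chain' (Adj E) (u :: lt1q) := hqch.prefix ⟨y :: r1q, hq1.symm⟩
  have hl1qtail : ∀ w ∈ lt1q, w ∈ A' := by
    intro w hw
    have hint : ∃ a b, [a,w,b] <:+: q := by
      rw [hq1]
      exact intmid (show w ∈ (u :: lt1q).tail from hw)
    rcases hqint w hint with rfl | hgood
    · exact absurd (List.mem_cons_of_mem u hw) hyl1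
    · exact ⟨hgood.1, hgood.2⟩
  have hl1qreach : ∀ z ∈ (u :: lt1q), Reach E A' u z :=
    walk_reach lt1q u Reach.base hl1qchain hl1qtail
  -- v-side of q
  have hr2qne : r2q ≠ [] := by
    rintro rfl
    rw [hq2, getLast?_append_cons'] at hql
    simp only [List.getLast?_singleton, Option.some.injEq] at hql
    exact hyv hql
  have hyr2qchain : List.Chain' (Adj E) (y :: r2q) := hqch.suffix ⟨l2q, hq2.symm⟩
  have hr2qlast : r2q.getLast? = some v := by
    rw [hq2, getLast?_append_cons', getLast?_cons_of_ne_nil hr2qne] at hql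
    exact hql
  have hr2qchain : List.Chain' (Adj E) r2q := hyr2qchain.tail
  have hr2qrevchain := chain'_adj_reverse hr2qchain
  have hr2qrevhead : r2q.reverse.head? = some v := by
    rw [List.head?_reverse]; exact hr2qlast
  have hr2qrevtail : ∀ w ∈ r2q.reverse.tail, w ∈ A' := by
    intro w hw
    have hwdl : w ∈ r2q.dropLast := mem_dropLast_of_mem_reverse_tail hw
    have hint : ∃ a b, [a,w,b] <:+: q := by
      rw [hq2]
      exact intmid2 hwdl
    rcases hqint w hint with rfl | hgood
    · exact absurd ((List.dropLast_sublist r2q).subset hwdl) hyr2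
    · exact ⟨hgood.1, hgood.2⟩
  have hr2qreach : ∀ z ∈ r2q, Reach E A' v z := by
    intro z hz
    have hrev : ∀ z' ∈ r2q.reverse, Reach E A' v z' := by
      rcases hr : r2q.reverse with _ | ⟨rh, rt⟩
      · intro z' hz'; simp at hz'
      · have hrh : rh = v := by
          rw [hr] at hr2qrevhead
          simpa using hr2qrevhead
        rw [hrh] at hr
        rw [hrh]
        rw [hr] at hr2qrevchain hr2qrevtail
        exact walk_reach rt v Reach.base hr2qrevchain (by simpa using hr2qrevtail)
    exact hrev z (List.mem_reverse.2 hz)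
  -- no edges / equalities between the u-side and the v-side
  have hNC : ∀ a', Reach E A' u a' → ∀ b', Reach E A' v b' → a' ≠ b' ∧ ¬ Adj E a' b' := by
    intro a' ha b' hb
    obtain ⟨pa, hpac, hpah, hpal, hpat⟩ := reach_list ha
    obtain ⟨pb, hpbc, hpbh, hpbl, hpbt⟩ := reach_list hb
    have hpane : pa ≠ [] := by rintro rfl; simp at hpah
    have hpbne : pb ≠ [] := by rintro rfl; simp at hpbh
    have hpaint : ∀ c w d, [c,w,d] <:+: pa → w ∈ A' :=
      fun c w d hinf => hpat w (mem_tail_of_triple hinf)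
    have hpbmemA : ∀ z ∈ pb, z ∈ A' := by
      intro z hz
      cases pb with
      | nil => simp at hz
      | cons b0 t =>
        have hb0 : b0 = v := by simpa using hpbh
        rcases List.mem_cons.1 hz with rfl | hz'
        · exact hb0 ▸ hvA'
        · exact hpbt z hz'
    obtain ⟨bb, tb, hrb⟩ := List.exists_cons_of_ne_nil
      (fun h => hpbne (List.reverse_eq_nil_iff.1 h))
    have hbb : bb = b' := by
      have := List.head?_reverse (l := pb)
      rw [hrb, hpbl] at this
      simpa using this
    rw [hbb] at hrb
    have hrbchain : List.Chain' (Adj E) (b' :: tb) := by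
      rw [← hrb]; exact chain'_adj_reverse hpbc
    have hrblast : (b' :: tb).getLast? = some v := by
      rw [← hrb, List.getLast?_reverse]; exact hpbh
    have htbmem : ∀ z ∈ tb, z ∈ A' := by
      intro z hz
      apply hpbmemA
      have : z ∈ pb.reverse := by rw [hrb]; exact List.mem_cons_of_mem b' hz
      exact List.mem_reverse.1 this
    constructor
    · rintro rfl
      cases tb with
      | nil =>
        -- pb = [a'], so a' = v and pa is a u-v walk
        have hav : a' = v := by simpa using hrblast
        apply hsep'
        exact sc0 hacyc hnov (S ∪ W) A' hA'good (fun z hz => hz.2)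
          pa.length pa le_rfl hpah (hav ▸ hpal) hpac hpaint
      | cons tb0 tbt =>
        apply hsep'
        refine sc0 hacyc hnov (S ∪ W) A' hA'good (fun z hz => hz.2)
          (pa ++ tb0 :: tbt).length (pa ++ tb0 :: tbt) le_rfl ?_ ?_ ?_ ?_
        · rw [List.head?_append, hpah]; rfl
        · rw [getLast?_append_cons']
          rw [getLast?_cons_of_ne_nil (by simp : (tb0 :: tbt : List V) ≠ [])] at hrblast
          exact hrblast
        · refine List.isChain_append.2 ⟨hpac, hrbchain.tail, ?_⟩
          intro x' hx' y' hy'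
          simp only [Option.mem_def] at hx' hy'
          rw [hpal] at hx'
          injection hx' with hx'
          subst hx'
          simp only [List.head?_cons, Option.some.injEq] at hy'
          subst hy'
          exact (List.isChain_cons_cons.1 hrbchain).1
        · intro c w d hinf
          have := mem_tail_of_triple hinf
          rw [List.tail_append_of_ne_nil hpane] at this
          rcases List.mem_append.1 this with h1 | h2
          · exact hpat w h1
          · exact htbmem w h2
    · intro hadj
      apply hsep'
      refine sc0 hacyc hnov (S ∪ W) A' hA'good (fun z hz => hz.2)
        (pa ++ b' :: tb).length (pa ++ b' :: tb) le_rfl ?_ ?_ ?_ ?_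
      · rw [List.head?_append, hpah]; rfl
      · rw [getLast?_append_cons']
        exact hrblast
      · refine List.isChain_append.2 ⟨hpac, hrbchain, ?_⟩
        intro x' hx' y' hy'
        simp only [Option.mem_def] at hx' hy'
        rw [hpal] at hx'
        injection hx' with hx'
        subst hx'
        simp only [List.head?_cons, Option.some.injEq] at hy'
        subst hy'
        exact hadj
      · intro c w d hinf
        have := mem_tail_of_triple hinf
        rw [List.tail_append_of_ne_nil hpane] at this
        rcases List.mem_append.1 this with h1 | h2
        · exact hpat w h1
        · rcases List.mem_cons.1 h2 with rfl | h2'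
          · apply hpbmemA
            exact mem_of_getLast? hpbl
          · exact htbmem w h2'
  -- exclusions
  have hyA' : y ∉ A' := fun h => h.2 (Or.inr hy)
  have hynl1 : y ∉ lt1 := fun h => hyA' (hl1tail y h)
  have hynlt1q : y ∉ lt1q := fun h => hyA' (hl1qtail y h)
  have hynr2 : y ∉ r2 := by
    intro hyr
    rcases List.eq_nil_or_concat r2 with rfl | ⟨L, b, hL⟩
    · simp at hyr
    · have hbv : b = v := by
        rw [hL, List.concat_eq_append] at hr2last
        simpa using hr2last
      rw [hL, List.concat_eq_append] at hyr
      rcases List.mem_append.1 hyr with h1 | h2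
      · have hint : ∃ c d, [c,y,d] <:+: p := by
          rw [hp2, hL, List.concat_eq_append]
          exact intmid2 (by rw [List.dropLast_concat]; exact h1)
        rcases hpint y hint with heq | hgood
        · exact hxyne heq.symm
        · exact hgood.2 (Or.inr hy)
      · have : y = b := by simpa using h2
        exact hyv (this.trans hbv)
  -- construction of s1 : from x through u to y
  have hP1chain : List.Chain' (Adj E) ((u :: lt1) ++ [x]) := hpch.prefix ⟨r1, by rw [hp1]; simp⟩
  have hrevP1 : ((u :: lt1) ++ [x]).reverse = x :: (u :: lt1).reverse := by simp
  have hs1chainL : List.Chain' (Adj E) (x :: (u :: lt1).reverse) := by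
    rw [← hrevP1]
    exact chain'_adj_reverse hP1chain
  have hQ1chain : List.Chain' (Adj E) (u :: (lt1q ++ [y])) := by
    have := hqch.prefix (show ((u :: lt1q) ++ [y]) <+: q from ⟨r1q, by rw [hq1]; simp⟩)
    exact (by simpa using this : List.IsChain (Adj E) (u :: (lt1q ++ [y])))
  obtain ⟨qh1, qt1, hqt1⟩ := List.exists_cons_of_ne_nil
    (show (lt1q ++ [y] : List V) ≠ [] by simp)
  have hadjuq : Adj E u qh1 := by
    have h := hQ1chain
    rw [hqt1] at h
    exact (List.isChain_cons_cons.1 h).1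
  set s1 : List V := (x :: (u :: lt1).reverse) ++ (lt1q ++ [y]) with hs1def
  have hs1chain : List.Chain' (Adj E) s1 := by
    refine List.isChain_append.2 ⟨hs1chainL, ?_, ?_⟩
    · exact hQ1chain.tail
    · intro x' hx' y' hy'
      simp only [Option.mem_def] at hx' hy'
      have hx'' : x' = u := by
        have : (x :: (u :: lt1).reverse).getLast? = some u := by
          rw [← hrevP1, List.getLast?_reverse]
          simp
        rw [this] at hx'
        injection hx' with h
        exact h.symm
      subst hx''
      rw [hqt1] at hy'
      simp only [List.head?_cons, Option.some.injEq] at hy'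
      subst hy'
      exact hadjuq
  have hs1head : s1.head? = some x := by simp [hs1def]
  have hs1last : s1.getLast? = some y := by
    rw [hs1def, List.getLast?_append]
    simp
  have hs1tail : s1.tail = (u :: lt1).reverse ++ (lt1q ++ [y]) := by
    simp [hs1def]
  have hs1dropLast : s1.dropLast = (x :: (u :: lt1).reverse) ++ lt1q := by
    rw [hs1def, List.dropLast_append_of_ne_nil (show (lt1q ++ [y] : List V) ≠ [] by simp),
      List.dropLast_concat]
  have hs1int : ∀ a w b, [a,w,b] <:+: s1 → w ∈ {z | Reach E A' u z} := by
    intro a w b hinf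
    have hwt := mem_tail_of_triple hinf
    have hwd := mem_dropLast_of_triple hinf
    rw [hs1tail] at hwt
    rw [hs1dropLast] at hwd
    rcases List.mem_append.1 hwt with h1 | h2
    · exact hl1reach w (List.mem_reverse.1 h1)
    · rcases List.mem_append.1 h2 with h3 | h4
      · exact hl1qreach w (List.mem_cons_of_mem u h3)
      · exfalso
        have hwy : w = y := by simpa using h4
        subst hwy
        rcases List.mem_append.1 hwd with h5 | h6
        · rcases List.mem_cons.1 h5 with heq | h7
          · exact hxyne heq.symm
          · rcases List.mem_cons.1 (List.mem_reverse.1 h7) with heq | h8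
            · exact hyu heq
            · exact hynl1 h8
        · exact hynlt1q h6
  -- construction of s2 : from x through v to y
  obtain ⟨rt2q, hrq⟩ : ∃ t, r2q.reverse = v :: t := by
    obtain ⟨rh, rt, hr⟩ := List.exists_cons_of_ne_nil
      (fun h => hr2qne (List.reverse_eq_nil_iff.1 h))
    refine ⟨rt, ?_⟩
    rw [hr] at hr2qrevhead ⊢
    simp only [List.head?_cons, Option.some.injEq] at hr2qrevhead
    rw [hr2qrevhead]
  have hrevQ2 : (y :: r2q).reverse = v :: (rt2q ++ [y]) := by
    rw [List.reverse_cons, hrq]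
    simp
  have hQ2revchain : List.Chain' (Adj E) (v :: (rt2q ++ [y])) := by
    rw [← hrevQ2]
    exact chain'_adj_reverse hyr2qchain
  obtain ⟨qh2, qt2, hqt2⟩ := List.exists_cons_of_ne_nil
    (show (rt2q ++ [y] : List V) ≠ [] by simp)
  have hadjvq : Adj E v qh2 := by
    have h := hQ2revchain
    rw [hqt2] at h
    exact (List.isChain_cons_cons.1 h).1
  have hxr2last : (x :: r2).getLast? = some v := by
    rw [getLast?_cons_of_ne_nil hr2ne]
    exact hr2last
  set s2 : List V := (x :: r2) ++ (rt2q ++ [y]) with hs2def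
  have hs2chain : List.Chain' (Adj E) s2 := by
    refine List.isChain_append.2 ⟨hxr2chain, ?_, ?_⟩
    · exact hQ2revchain.tail
    · intro x' hx' y' hy'
      simp only [Option.mem_def] at hx' hy'
      rw [hxr2last] at hx'
      injection hx' with hx'
      subst hx'
      rw [hqt2] at hy'
      simp only [List.head?_cons, Option.some.injEq] at hy'
      subst hy'
      exact hadjvq
  have hs2head : s2.head? = some x := by simp [hs2def]
  have hs2last : s2.getLast? = some y := by
    rw [hs2def, List.getLast?_append]
    simp
  have hs2tail : s2.tail = r2 ++ (rt2q ++ [y]) := by simp [hs2def]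
  have hs2dropLast : s2.dropLast = (x :: r2) ++ rt2q := by
    rw [hs2def, List.dropLast_append_of_ne_nil (show (rt2q ++ [y] : List V) ≠ [] by simp),
      List.dropLast_concat]
  have hrt2qmem : ∀ z ∈ rt2q, z ∈ r2q := by
    intro z hz
    have : z ∈ r2q.reverse := by
      rw [hrq]
      exact List.mem_cons_of_mem v hz
    exact List.mem_reverse.1 this
  have hs2int : ∀ a w b, [a,w,b] <:+: s2 → w ∈ {z | Reach E A' v z} := by
    intro a w b hinf
    have hwt := mem_tail_of_triple hinf
    have hwd := mem_dropLast_of_triple hinf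
    rw [hs2tail] at hwt
    rw [hs2dropLast] at hwd
    rcases List.mem_append.1 hwt with h1 | h2
    · exact hr2reach w h1
    · rcases List.mem_append.1 h2 with h3 | h4
      · exact hr2qreach w (hrt2qmem w h3)
      · exfalso
        have hwy : w = y := by simpa using h4
        subst hwy
        rcases List.mem_append.1 hwd with h5 | h6
        · rcases List.mem_cons.1 h5 with heq | h7
          · exact hxyne heq.symm
          · exact hynr2 h7
        · exact hyr2 (hrt2qmem w h6)
  exact claim hacyc hS hnov {z | Reach E A' u z} {z | Reach E A' v z} x y
    (fun z hz => (reach_mem hz).imp id (fun h => hA'good z h))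
    (fun z hz => by
      rcases reach_mem hz with rfl | h
      · exact ⟨Or.inr Relation.ReflTransGen.refl, hvS⟩
      · exact hA'good z h)
    (fun a ha b hb => hNC a ha b hb)
    hxA hxS hyA hyS hxyne hxyadj
    (s1.length + s2.length) s1 s2 le_rfl
    hs1chain hs1head hs1last hs1int hs2chain hs2head hs2last hs2int
end
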